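/- Let ψ(t) = i a·t − (t·σ²t)/2 + z ∫_{ℝ^N∖{0}} (e^{i t·s} − 1) dr(s) for t ∈ ℝ^N, where r is a probability measure on ℝ^N∖{0} with finite first and second moments. Then (i) there is a constant C > 0 with |ψ(t)| ≤ C(‖t‖ + ‖t‖²) for all t ∈ ℝ^N, so that for every Schwartz function f ∈ 𝒮(ℝ^d; ℝ^N) the function x ↦ ψ(f(x)) is integrable over ℝ^d; and (ii) the map 𝒮(ℝ^d; ℝ^N) → ℂ, f ↦ ∫_{ℝ^d} ψ(f(x)) dx, is continuous with respect to the Schwartz topology. -/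

import Mathlib

open scoped BigOperators
open MeasureTheory

/-- The Lévy function
`ψ(t) = i a·t − (t·σ²t)/2 + z ∫_{ℝ^N∖{0}} (e^{i t·s} − 1) dr(s)`. -/
noncomputable def levyFunction {N : ℕ} (a : EuclideanSpace ℝ (Fin N))
    (σ2 : Matrix (Fin N) (Fin N) ℝ) (z : ℝ)
    (r : Measure (EuclideanSpace ℝ (Fin N))) (t : EuclideanSpace ℝ (Fin N)) : ℂ :=
  Complex.I * ((inner ℝ a t : ℝ) : ℂ) - ((∑ i, ∑ j, t i * σ2 i j * t j : ℝ) : ℂ) / 2 +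
    (z : ℂ) * ∫ s, (Complex.exp (Complex.I * ((inner ℝ t s : ℝ) : ℂ)) - 1) ∂r

/-! The Lévy function vanishes at `0` and is Lipschitz on bounded sets:
`‖ψ t - ψ t'‖ ≤ (‖a‖ + |z| ∫ ‖s‖ dr + ½ ∑ |σ²ᵢⱼ| (‖t‖ + ‖t'‖)) ‖t - t'‖`,
the jump part because `|e^{ix} - e^{iy}| ≤ |x - y|` and `r` has a first moment.
Taking `t' = 0` gives the growth bound. If two Schwartz functions `f`, `g` take values in the
ball of radius `R`, the Lipschitz bound on that ball gives `|∫ ψ ∘ f - ∫ ψ ∘ g| ≤ L_R ‖f - g‖_{L¹}`;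
since the sup norm and the `L¹` norm are continuous on `𝓢`, `f ↦ ∫ ψ ∘ f` is continuous. -/
open Complex Metric Filter Topology

section Quadratic

variable {ι : Type*} [Fintype ι]

lemma abs_sum_sum_mul_mul_le (A : Matrix ι ι ℝ) (u v : EuclideanSpace ℝ ι) :
    |∑ i, ∑ j, u i * A i j * v j| ≤ (∑ i, ∑ j, |A i j|) * (‖u‖ * ‖v‖) := by
  rw [Finset.sum_mul]
  refine (Finset.abs_sum_le_sum_abs _ _).trans (Finset.sum_le_sum fun i _ => ?_)
  rw [Finset.sum_mul]
  refine (Finset.abs_sum_le_sum_abs _ _).trans (Finset.sum_le_sum fun j _ => ?_)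
  rw [abs_mul, abs_mul]
  calc |u i| * |A i j| * |v j| ≤ ‖u‖ * |A i j| * ‖v‖ := by
        gcongr
        · exact PiLp.norm_apply_le u i
        · exact PiLp.norm_apply_le v j
    _ = |A i j| * (‖u‖ * ‖v‖) := by ring

lemma abs_sum_sum_mul_mul_sub_le (A : Matrix ι ι ℝ) (t t' : EuclideanSpace ℝ ι) :
    |∑ i, ∑ j, t i * A i j * t j - ∑ i, ∑ j, t' i * A i j * t' j| ≤
      (∑ i, ∑ j, |A i j|) * ((‖t‖ + ‖t'‖) * ‖t - t'‖) := by
  have hsplit : ∑ i, ∑ j, t i * A i j * t j - ∑ i, ∑ j, t' i * A i j * t' j =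
      ∑ i, ∑ j, (t - t') i * A i j * t j + ∑ i, ∑ j, t' i * A i j * (t - t') j := by
    simp only [PiLp.sub_apply, ← Finset.sum_sub_distrib, ← Finset.sum_add_distrib]
    exact Finset.sum_congr rfl fun i _ => Finset.sum_congr rfl fun j _ => by ring
  rw [hsplit]
  calc _ ≤ (∑ i, ∑ j, |A i j|) * (‖t - t'‖ * ‖t‖) + (∑ i, ∑ j, |A i j|) * (‖t'‖ * ‖t - t'‖) :=
        (abs_add_le _ _).trans <| add_le_add (abs_sum_sum_mul_mul_le A _ _)
          (abs_sum_sum_mul_mul_le A _ _)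
    _ = _ := by ring

end Quadratic

lemma norm_cexp_I_mul_sub_cexp_I_mul_le (x y : ℝ) :
    ‖exp (I * x) - exp (I * y)‖ ≤ |x - y| := by
  have hfactor : exp (I * x) - exp (I * y) = exp (I * y) * (exp (I * ↑(x - y)) - 1) := by
    rw [mul_sub, mul_one, ← Complex.exp_add]
    push_cast
    ring_nf
  rw [hfactor, norm_mul, mul_comm I, Complex.norm_exp_ofReal_mul_I, one_mul]
  exact Real.norm_exp_I_mul_ofReal_sub_one_le

section Poisson

variable {E : Type*} [NormedAddCommGroup E] [InnerProductSpace ℝ E] [MeasurableSpace E]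
  [OpensMeasurableSpace E] (r : Measure E) [IsFiniteMeasure r]

lemma integrable_cexp_I_mul_inner_sub_one (t : E) :
    Integrable (fun s => exp (I * ((inner ℝ t s : ℝ) : ℂ)) - 1) r := by
  refine (integrable_const (2 : ℝ)).mono' (by fun_prop) (ae_of_all _ fun s => ?_)
  calc _ ≤ ‖exp (I * ((inner ℝ t s : ℝ) : ℂ))‖ + ‖(1 : ℂ)‖ := norm_sub_le _ _
    _ = 2 := by rw [mul_comm, Complex.norm_exp_ofReal_mul_I]; norm_num

lemma norm_integral_cexp_I_mul_inner_sub_le (hr : Integrable (fun s => ‖s‖) r) (t t' : E) :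
    ‖∫ s, (exp (I * ((inner ℝ t s : ℝ) : ℂ)) - 1) ∂r -
        ∫ s, (exp (I * ((inner ℝ t' s : ℝ) : ℂ)) - 1) ∂r‖ ≤ (∫ s, ‖s‖ ∂r) * ‖t - t'‖ := by
  rw [← integral_sub (integrable_cexp_I_mul_inner_sub_one r t)
    (integrable_cexp_I_mul_inner_sub_one r t'), ← integral_mul_const]
  refine norm_integral_le_of_norm_le (hr.mul_const _) (ae_of_all _ fun s => ?_)
  calc _ = ‖exp (I * ((inner ℝ t s : ℝ) : ℂ)) - exp (I * ((inner ℝ t' s : ℝ) : ℂ))‖ := by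
        ring_nf
    _ ≤ |inner ℝ t s - inner ℝ t' s| := norm_cexp_I_mul_sub_cexp_I_mul_le _ _
    _ ≤ ‖s‖ * ‖t - t'‖ := by
        rw [← inner_sub_left, mul_comm]
        exact abs_real_inner_le_norm _ _

end Poisson

section Levy

variable {N : ℕ} (a : EuclideanSpace ℝ (Fin N)) (σ2 : Matrix (Fin N) (Fin N) ℝ) (z : ℝ)
  (r : Measure (EuclideanSpace ℝ (Fin N)))

@[simp]
lemma levyFunction_zero : levyFunction a σ2 z r 0 = 0 := by
  simp [levyFunction]

variable [IsFiniteMeasure r]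

lemma norm_levyFunction_sub_le (hr : Integrable (fun s => ‖s‖) r)
    (t t' : EuclideanSpace ℝ (Fin N)) :
    ‖levyFunction a σ2 z r t - levyFunction a σ2 z r t'‖ ≤
      (‖a‖ + |z| * ∫ s, ‖s‖ ∂r + (∑ i, ∑ j, |σ2 i j|) / 2 * (‖t‖ + ‖t'‖)) * ‖t - t'‖ := by
  have hsplit : levyFunction a σ2 z r t - levyFunction a σ2 z r t' =
      I * ((inner ℝ a t - inner ℝ a t' : ℝ) : ℂ) -
        ((∑ i, ∑ j, t i * σ2 i j * t j - ∑ i, ∑ j, t' i * σ2 i j * t' j : ℝ) : ℂ) / 2 +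
        z * (∫ s, (exp (I * ((inner ℝ t s : ℝ) : ℂ)) - 1) ∂r -
          ∫ s, (exp (I * ((inner ℝ t' s : ℝ) : ℂ)) - 1) ∂r) := by
    simp only [levyFunction]
    push_cast
    ring
  have hdrift : |inner ℝ a t - inner ℝ a t'| ≤ ‖a‖ * ‖t - t'‖ := by
    rw [← inner_sub_right]
    exact abs_real_inner_le_norm a (t - t')
  have hgauss := abs_sum_sum_mul_mul_sub_le σ2 t t'
  have hjump := norm_integral_cexp_I_mul_inner_sub_le r hr t t'
  calc _ ≤ |inner ℝ a t - inner ℝ a t'| +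
          |∑ i, ∑ j, t i * σ2 i j * t j - ∑ i, ∑ j, t' i * σ2 i j * t' j| / 2 +
          |z| * ‖∫ s, (exp (I * ((inner ℝ t s : ℝ) : ℂ)) - 1) ∂r -
            ∫ s, (exp (I * ((inner ℝ t' s : ℝ) : ℂ)) - 1) ∂r‖ := by
        rw [hsplit]
        refine ((norm_add_le _ _).trans (add_le_add (norm_sub_le _ _) le_rfl)).trans_eq ?_
        simp only [norm_mul, norm_div, norm_I, one_mul, norm_real, Real.norm_eq_abs,
          Complex.norm_ofNat]
    _ ≤ ‖a‖ * ‖t - t'‖ + (∑ i, ∑ j, |σ2 i j|) * ((‖t‖ + ‖t'‖) * ‖t - t'‖) / 2 +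
          |z| * ((∫ s, ‖s‖ ∂r) * ‖t - t'‖) := by
        gcongr
    _ = _ := by ring

lemma exists_norm_levyFunction_le (hr : Integrable (fun s => ‖s‖) r) :
    ∃ C : ℝ, 0 < C ∧ ∀ t : EuclideanSpace ℝ (Fin N),
      ‖levyFunction a σ2 z r t‖ ≤ C * (‖t‖ + ‖t‖ ^ 2) := by
  refine ⟨‖a‖ + |z| * ∫ s, ‖s‖ ∂r + (∑ i, ∑ j, |σ2 i j|) / 2 + 1, by positivity, fun t => ?_⟩
  have h := norm_levyFunction_sub_le a σ2 z r hr t 0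
  simp only [levyFunction_zero, sub_zero, norm_zero, add_zero] at h
  refine h.trans ?_
  have hK : 0 ≤ ‖a‖ + |z| * ∫ s, ‖s‖ ∂r := by positivity
  have hM : 0 ≤ ∑ i, ∑ j, |σ2 i j| := by positivity
  nlinarith [mul_nonneg hK (sq_nonneg ‖t‖), mul_nonneg hM (norm_nonneg t), norm_nonneg t]

lemma exists_lipschitzOnWith_levyFunction (hr : Integrable (fun s => ‖s‖) r) (R : ℝ) :
    ∃ L, LipschitzOnWith L (levyFunction a σ2 z r) (closedBall 0 R) := by
  refine ⟨_, LipschitzOnWith.of_dist_le' (K := ‖a‖ + |z| * ∫ s, ‖s‖ ∂r +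
    (∑ i, ∑ j, |σ2 i j|) / 2 * (R + R)) fun t ht t' ht' => ?_⟩
  rw [mem_closedBall_zero_iff] at ht ht'
  rw [dist_eq_norm, dist_eq_norm]
  refine (norm_levyFunction_sub_le a σ2 z r hr t t').trans ?_
  gcongr

end Levy

namespace SchwartzMap

variable {E F G : Type*} [NormedAddCommGroup E] [NormedSpace ℝ E] [MeasurableSpace E]
  [BorelSpace E] [SecondCountableTopology E] [NormedAddCommGroup F] [NormedSpace ℝ F]
  [NormedAddCommGroup G] {μ : Measure E} [μ.HasTemperateGrowth]
  {Ψ : F → G} {L : NNReal} {R : ℝ}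

lemma integrable_comp_of_lipschitzOnWith (hΨ0 : Ψ 0 = 0)
    (hΨ : LipschitzOnWith L Ψ (closedBall 0 R)) {f : 𝓢(E, F)} (hf : ∀ x, ‖f x‖ ≤ R) :
    Integrable (fun x => Ψ (f x)) μ := by
  have hball : ∀ x, f x ∈ closedBall 0 R := fun x => mem_closedBall_zero_iff.2 (hf x)
  refine (f.integrable.norm.const_mul L).mono'
    (hΨ.continuousOn.comp_continuous f.continuous hball).aestronglyMeasurable
    (ae_of_all _ fun x => ?_)
  simpa [hΨ0] using hΨ.norm_sub_le (hball x) (mem_closedBall_self ((norm_nonneg _).trans (hf x)))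

lemma integrable_comp (hΨ0 : Ψ 0 = 0) (hΨ : ∀ R, ∃ L, LipschitzOnWith L Ψ (closedBall 0 R))
    (f : 𝓢(E, F)) : Integrable (fun x => Ψ (f x)) μ :=
  have ⟨_, hL⟩ := hΨ (SchwartzMap.seminorm ℝ 0 0 f)
  integrable_comp_of_lipschitzOnWith hΨ0 hL (norm_le_seminorm ℝ f)

lemma norm_integral_comp_sub_le [NormedSpace ℝ G] (hΨ0 : Ψ 0 = 0)
    (hΨ : LipschitzOnWith L Ψ (closedBall 0 R))
    {f g : 𝓢(E, F)} (hf : ∀ x, ‖f x‖ ≤ R) (hg : ∀ x, ‖g x‖ ≤ R) :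
    ‖∫ x, Ψ (f x) ∂μ - ∫ x, Ψ (g x) ∂μ‖ ≤ L * ∫ x, ‖f x - g x‖ ∂μ := by
  rw [← integral_sub (integrable_comp_of_lipschitzOnWith hΨ0 hΨ hf)
    (integrable_comp_of_lipschitzOnWith hΨ0 hΨ hg), ← integral_const_mul]
  exact norm_integral_le_of_norm_le ((f.integrable.sub g.integrable).norm.const_mul _)
    (ae_of_all _ fun x => hΨ.norm_sub_le (mem_closedBall_zero_iff.2 (hf x))
      (mem_closedBall_zero_iff.2 (hg x)))

lemma tendsto_integral_norm_sub (f₀ : 𝓢(E, F)) :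
    Tendsto (fun f : 𝓢(E, F) => ∫ x, ‖f x - f₀ x‖ ∂μ) (𝓝 f₀) (𝓝 0) := by
  have hcont : Continuous fun f : 𝓢(E, F) => ‖(f - f₀).toLp 1 μ‖ := by fun_prop
  simpa [norm_toLp_one] using hcont.tendsto f₀

lemma continuous_integral_comp [NormedSpace ℝ G] (hΨ0 : Ψ 0 = 0)
    (hΨ : ∀ R, ∃ L, LipschitzOnWith L Ψ (closedBall 0 R)) :
    Continuous fun f : 𝓢(E, F) => ∫ x, Ψ (f x) ∂μ := by
  refine continuous_iff_continuousAt.2 fun f₀ => ?_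
  obtain ⟨L, hL⟩ := hΨ (SchwartzMap.seminorm ℝ 0 0 f₀ + 1)
  have hbounded : ∀ᶠ f in 𝓝 f₀, ∀ x, ‖f x‖ ≤ SchwartzMap.seminorm ℝ 0 0 f₀ + 1 := by
    have hsem := ((schwartz_withSeminorms ℝ E F).continuous_seminorm (0, 0)).tendsto f₀
    filter_upwards [hsem.eventually (gt_mem_nhds (lt_add_one _))] with f hf x
    exact (norm_le_seminorm ℝ f x).trans hf.le
  refine tendsto_iff_norm_sub_tendsto_zero.2 (squeeze_zero' (Eventually.of_forall fun _ =>
    norm_nonneg _) ?_ (by simpa using (tendsto_integral_norm_sub (μ := μ) f₀).const_mul (L : ℝ)))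
  filter_upwards [hbounded] with f hf
  exact norm_integral_comp_sub_le hΨ0 hL hf fun x => (norm_le_seminorm ℝ f₀ x).trans (by simp)

end SchwartzMap

theorem levyFunction_growth_and_continuity
    (d N : ℕ) (a : EuclideanSpace ℝ (Fin N))
    (σ2 : Matrix (Fin N) (Fin N) ℝ)
    (z : ℝ)
    (r : Measure (EuclideanSpace ℝ (Fin N))) [IsProbabilityMeasure r]
    (hmom1 : Integrable (fun s => ‖s‖) r) :
    (∃ C : ℝ, 0 < C ∧ ∀ t : EuclideanSpace ℝ (Fin N),
        ‖levyFunction a σ2 z r t‖ ≤ C * (‖t‖ + ‖t‖ ^ 2)) ∧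
    (∀ f : SchwartzMap (EuclideanSpace ℝ (Fin d)) (EuclideanSpace ℝ (Fin N)),
        Integrable (fun x => levyFunction a σ2 z r (f x)) volume) ∧
    Continuous (fun f : SchwartzMap (EuclideanSpace ℝ (Fin d)) (EuclideanSpace ℝ (Fin N)) =>
        ∫ x, levyFunction a σ2 z r (f x)) :=
  have hlip := exists_lipschitzOnWith_levyFunction a σ2 z r hmom1
  ⟨exists_norm_levyFunction_le a σ2 z r hmom1,
    SchwartzMap.integrable_comp (levyFunction_zero a σ2 z r) hlip,
    SchwartzMap.continuous_integral_comp (levyFunction_zero a σ2 z r) hlip⟩
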